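/- arXiv:2511.13430 — 10 statements merged into one kernel-verified Lean document; each statement's English description precedes it below -/
import Mathlib

section
/- If a finite group G admits a symmetric harmonious sequence, then the order of G is odd. -/
def IsSymmetricHarmonious (G : Type*) [Group G] [Finite G] : Prop :=
  ∃ g : ZMod (Nat.card G) → G, Function.Bijective g ∧
    Function.Bijective (fun i => g i * g (i + 1)) ∧
    ∀ i : ZMod (Nat.card G), i ≠ 0 → g i * g (-i) = 1

theorem stmt0 (G : Type*) [Group G] [Finite G]
    (h : IsSymmetricHarmonious G) : Odd (Nat.card G) := by
  by_contra hodd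
  rw [Nat.not_odd_iff_even] at hodd
  set ℓ := Nat.card G with hℓ
  have hpos : 0 < ℓ := Nat.card_pos
  obtain ⟨k, hk⟩ := hodd
  have hkpos : 0 < k := by omega
  haveI : NeZero ℓ := ⟨by omega⟩
  -- element of order 2
  haveI := Fintype.ofFinite G
  haveI : Fact (Nat.Prime 2) := ⟨Nat.prime_two⟩
  obtain ⟨t, ht⟩ := exists_prime_orderOf_dvd_card (G := G) 2
    (by rw [← Nat.card_eq_fintype_card, ← hℓ]; omega)
  have ht1 : t ≠ 1 := by
    intro h1; rw [h1, orderOf_one] at ht; omega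
  have ht2 : t * t = 1 := by
    have := pow_orderOf_eq_one t
    rwa [ht, pow_two] at this
  obtain ⟨g, hgb, hhb, hsym⟩ := h
  set m : ZMod ℓ := ((k : ℕ) : ZMod ℓ) with hm
  have hℓ0 : ((ℓ : ℕ) : ZMod ℓ) = 0 := ZMod.natCast_self ℓ
  have hm0 : m ≠ 0 := by
    intro h0
    rw [hm, ZMod.natCast_eq_zero_iff] at h0
    obtain ⟨c, hc⟩ := h0
    rcases c with _ | c <;> nlinarith
  have hmm : m + m = 0 := by
    rw [hm, ← Nat.cast_add, show k + k = ℓ by omega, hℓ0]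
  -- classification of 2-torsion in ZMod ℓ
  have htwo : ∀ i : ZMod ℓ, i + i = 0 → i = 0 ∨ i = m := by
    intro i hi
    have hv : (((i.val + i.val : ℕ)) : ZMod ℓ) = 0 := by
      push_cast
      rw [ZMod.natCast_zmod_val, hi]
    rw [ZMod.natCast_eq_zero_iff] at hv
    have hlt : i.val < ℓ := ZMod.val_lt i
    obtain ⟨c, hc⟩ := hv
    have hc2 : c < 2 := by
      by_contra hc2
      have : ℓ * 2 ≤ ℓ * c := Nat.mul_le_mul_left ℓ (by omega)
      omega
    have : i.val = 0 ∨ i.val = k := by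
      interval_cases c <;> omega
    rcases this with h0 | h0
    · left
      rw [← ZMod.natCast_zmod_val i, h0, Nat.cast_zero]
    · right
      rw [← ZMod.natCast_zmod_val i, h0, hm]
  -- no solution to 2i+1 = 0
  have hodd' : ∀ i : ZMod ℓ, i + i + 1 ≠ 0 := by
    intro i hi
    have h2 : (2 : ℕ) ∣ ℓ := ⟨k, by omega⟩
    have := congrArg (ZMod.castHom h2 (ZMod 2)) hi
    rw [map_add, map_add, map_one, map_zero] at this
    rw [CharTwo.add_self_eq_zero, zero_add] at this
    exact one_ne_zero this
  have hne10 : (1 : ZMod ℓ) ≠ 0 := by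
    have := hodd' 0
    intro h1; simp [h1] at this
  -- symmetry: g (-i) = (g i)⁻¹ for i ≠ 0
  have hinv : ∀ i : ZMod ℓ, i ≠ 0 → g (-i) = (g i)⁻¹ := by
    intro i hi
    exact (inv_eq_of_mul_eq_one_right (hsym i hi)).symm
  -- Claim A: squares to 1 implies g 0 or g m
  have claimA : ∀ x : G, x * x = 1 → x = g 0 ∨ x = g m := by
    intro x hx
    obtain ⟨i, rfl⟩ := hgb.2 x
    by_cases hi : i = 0
    · left; rw [hi]
    · have h1 : g (-i) = g i := by
        rw [hinv i hi, inv_eq_of_mul_eq_one_right hx]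
      have h2 : -i = i := hgb.1 h1
      have h3 : i + i = 0 := by linear_combination -h2
      rcases htwo i h3 with h4 | h4 <;> [exact absurd h4 hi; (right; rw [h4])]
  -- Claim B: squares to 1 implies h 0 or h (-1)
  set hf : ZMod ℓ → G := fun i => g i * g (i + 1) with hhf
  have claimB : ∀ x : G, x * x = 1 → x = hf 0 ∨ x = hf (-1) := by
    intro x hx
    obtain ⟨i, rfl⟩ := hhb.2 x
    by_cases hi0 : i = 0
    · left; rw [hi0]
    by_cases hi1 : i + 1 = 0
    · right
      have : i = -1 := by linear_combination hi1
      rw [this]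
    · exfalso
      have hj : hf (-(i + 1)) = hf i := by
        have e1 : -(i+1) + 1 = -i := by ring
        calc hf (-(i+1)) = g (-(i+1)) * g (-i) := by rw [hhf]; simp only []; rw [e1]
          _ = (g (i+1))⁻¹ * (g i)⁻¹ := by rw [hinv _ hi1, hinv _ hi0]
          _ = (g i * g (i+1))⁻¹ := by rw [mul_inv_rev]
          _ = hf i := by
              rw [inv_eq_of_mul_eq_one_right hx]
      have h2 : -(i + 1) = i := hhb.1 hj
      exact hodd' i (by linear_combination -h2)
  -- g m * g m = 1
  have hgm : g m * g m = 1 := by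
    have := hsym m hm0
    rwa [show -m = m by linear_combination -hmm] at this
  -- h 0 * h (-1) = g 0 * g 0
  have hprod : hf 0 * hf (-1) = g 0 * g 0 := by
    rw [hhf]; simp only []
    rw [show (-1 : ZMod ℓ) + 1 = 0 by ring, zero_add]
    rw [hinv 1 hne10]
    group
  -- {1, t} = {hf 0, hf (-1)}: deduce g 0 * g 0 = t
  have hgt : g 0 * g 0 = t := by
    rcases claimB 1 (one_mul 1) with h1 | h1 <;>
      rcases claimB t ht2 with h2 | h2
    · exact absurd (h2.trans h1.symm) ht1
    · rw [← hprod, ← h1, ← h2, one_mul]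
    · rw [← hprod, ← h1, ← h2, mul_one]
    · exact absurd (h2.trans h1.symm) ht1
  -- finish using claim A
  have hg0t : g 0 ≠ t := by
    intro e
    rw [e] at hgt
    rw [ht2] at hgt
    exact ht1 hgt.symm
  have hg01 : g 0 ≠ 1 := by
    intro e; rw [e, one_mul] at hgt; exact ht1 hgt.symm
  rcases claimA 1 (one_mul 1) with h1 | h1
  · exact hg01 h1.symm
  rcases claimA t ht2 with h2 | h2
  · exact hg0t h2.symm
  · exact ht1 (h1.trans h2.symm).symm
end

section
/- Let H be a normal subgroup of a finite group G such that both H and the quotient G/H have odd order and are symmetric harmonious. Then G is symmetric harmonious. -/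
set_option linter.unusedSectionVars false

private lemma zmod_cast_val {n : ℕ} [NeZero n] (j : ZMod n) : ((j.val : ℕ) : ZMod n) = j := by
  rw [ZMod.natCast_val, ZMod.cast_id]

section Defs
variable {G : Type*} [Group G]

private def Bf {n : ℕ} (a : ZMod n → G) : ℕ → G
  | 0 => 1
  | v+1 => (a ((v : ℕ) : ZMod n))⁻¹ * Bf a v

private def rf {m n : ℕ} (N : ℕ) (h : ZMod m → G) (a : ZMod n → G) (j : ZMod n) (k : ZMod m) : G :=
  if j.val ≤ N then Bf a j.val * h k * (Bf a j.val)⁻¹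
  else (a ((n - j.val : ℕ) : ZMod n))⁻¹ * (Bf a (n - j.val) * h (k+1) * (Bf a (n - j.val))⁻¹) *
    a ((n - j.val : ℕ) : ZMod n)

private lemma rf_mem {m n : ℕ} (N : ℕ) (H : Subgroup G) [H.Normal] (h : ZMod m → G)
    (a : ZMod n → G) (hmem : ∀ k, h k ∈ H) (j : ZMod n) (k : ZMod m) : rf N h a j k ∈ H := by
  unfold rf
  split
  · exact Subgroup.Normal.conj_mem ‹H.Normal› _ (hmem k) _
  · simpa using Subgroup.Normal.conj_mem ‹H.Normal› _
      (Subgroup.Normal.conj_mem ‹H.Normal› _ (hmem (k+1)) _) (a ((n - j.val : ℕ) : ZMod n))⁻¹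

private lemma rf_inj {m n : ℕ} (N : ℕ) (h : ZMod m → G) (a : ZMod n → G)
    (hinj : Function.Injective h) (j : ZMod n) : Function.Injective (rf N h a j) := by
  intro k₁ k₂ e
  unfold rf at e
  split at e
  · have := hinj (mul_left_cancel (mul_right_cancel e))
    exact this
  · have e2 : h (k₁+1) = h (k₂+1) := by
      have := mul_left_cancel (mul_right_cancel e)
      exact mul_left_cancel (mul_right_cancel this)
    have := hinj e2
    exact add_right_cancel this

private lemma neg_val_of_ne {n : ℕ} [NeZero n] {j : ZMod n} (hj : j ≠ 0) :
    (-j).val = n - j.val := by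
  rw [ZMod.neg_val, if_neg hj]

private lemma cast_sub_val {n : ℕ} [NeZero n] (j : ZMod n) (hlt : j.val ≤ n) :
    ((n - j.val : ℕ) : ZMod n) = -j := by
  rw [Nat.cast_sub hlt, ZMod.natCast_self, zmod_cast_val, zero_sub]

private lemma rf_symm {m n N : ℕ} [NeZero n] [NeZero m] (hn : n = 2*N+1)
    (h : ZMod m → G) (a : ZMod n → G)
    (hneg : ∀ k, h (-k) = (h k)⁻¹)
    (aneg : ∀ j, a (-j) = (a j)⁻¹)
    (j : ZMod n) (hj : j ≠ 0) (k : ZMod m) :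
    rf N h a (-j) (-k-1) = (a j)⁻¹ * (rf N h a j k)⁻¹ * a j := by
  have hv : j.val < n := ZMod.val_lt j
  have hv1 : 1 ≤ j.val := by
    rcases Nat.eq_zero_or_pos j.val with h0 | h0
    · exact absurd ((ZMod.val_eq_zero j).mp h0) hj
    · exact h0
  have negval : (-j).val = n - j.val := neg_val_of_ne hj
  by_cases hle : j.val ≤ N
  · rw [rf, if_neg (by omega), rf, if_pos hle, negval,
      show n - (n - j.val) = j.val from by omega, zmod_cast_val]
    rw [show (-k-1+1 : ZMod m) = -k from by ring, hneg]
    group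
  · have hc : ((n - j.val : ℕ) : ZMod n) = -j := cast_sub_val j (le_of_lt hv)
    rw [rf, if_pos (by omega), rf, if_neg hle, negval, hc, aneg]
    rw [show (-k-1 : ZMod m) = -(k+1) from by ring, hneg]
    group

private lemma bf_succ {n : ℕ} (a : ZMod n → G) (v : ℕ) :
    Bf a (v+1) = (a ((v : ℕ) : ZMod n))⁻¹ * Bf a v := rfl

private lemma rf_prod_inj {m n N : ℕ} [NeZero n] [NeZero m] (hn : n = 2*N+1)
    (H : Subgroup G) (h : ZMod m → G) (a : ZMod n → G)
    (hmem : ∀ k, h k ∈ H)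
    (hinj : Function.Injective h)
    (hpinj : Function.Injective (fun k => h k * h (k+1)))
    (sqinj : ∀ x y : G, x ∈ H → y ∈ H → x * x = y * y → x = y)
    (a0 : a 0 = 1) (aneg : ∀ j, a (-j) = (a j)⁻¹) (j : ZMod n) :
    Function.Injective (fun k => rf N h a j k * a j *
      rf N h a (j+1) (k + (if j.val = n-1 then 1 else 0))) := by
  have hv : j.val < n := ZMod.val_lt j
  have hBzero : Bf a 0 = 1 := rfl
  by_cases hw : j.val = n-1
  · -- wrap case : j + 1 = 0
    by_cases hN : N = 0
    · -- n = 1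
      have hn1 : n = 1 := by omega
      subst hn1
      have hN0 : N = 0 := by omega
      subst hN0
      have hj0 : j = 0 := Subsingleton.elim _ _
      have hj1' : (1 : ZMod 1) = 0 := Subsingleton.elim _ _
      have key : ∀ k, rf 0 h a j k * a j * rf 0 h a (j+1) (k+1)
          = 1 * (h k * h (k+1)) * 1 := by
        intro k
        simp only [hj0, zero_add, hj1', rf, ZMod.val_zero, Nat.le_refl, if_true, hBzero, a0]
        group
      intro k₁ k₂ e
      simp only [if_pos hw] at e
      rw [key k₁, key k₂] at e
      exact hpinj (mul_left_cancel (mul_right_cancel e))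
    · -- n ≥ 3
      have hj : j = ((n-1 : ℕ) : ZMod n) := by rw [← hw, zmod_cast_val]
      have hj1 : j + 1 = 0 := by
        rw [hj, show ((n-1:ℕ) : ZMod n) + 1 = ((n-1+1 : ℕ) : ZMod n) from by push_cast; ring,
          show n-1+1 = n from by omega, ZMod.natCast_self]
      have hjm : j = -1 := by
        rw [hj, Nat.cast_sub (by omega : 1 ≤ n), ZMod.natCast_self, Nat.cast_one, zero_sub]
      have hB1 : Bf a 1 = 1 := by
        rw [show (1:ℕ) = 0 + 1 from rfl, bf_succ, Nat.cast_zero, a0, hBzero, inv_one, one_mul]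
      have key : ∀ k, rf N h a j k * a j * rf N h a (j+1) (k+1)
          = (a 1)⁻¹ * (h (k+1) * h (k+1)) * 1 := by
        intro k
        rw [rf, if_neg (by omega), show n - j.val = 1 from by omega, hj1, rf, ZMod.val_zero,
          if_pos (Nat.zero_le N), hB1, hBzero, Nat.cast_one, hjm, aneg 1]
        group
      intro k₁ k₂ e
      simp only [if_pos hw] at e
      rw [key k₁, key k₂] at e
      have e2 := mul_left_cancel (mul_right_cancel e)
      exact add_right_cancel (hinj (sqinj _ _ (hmem _) (hmem _) e2))
  · -- no wrap : (j+1).val = j.val + 1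
    have succval : (j+1).val = j.val + 1 := by
      have hj : j + 1 = ((j.val + 1 : ℕ) : ZMod n) := by
        rw [Nat.cast_add, Nat.cast_one, zmod_cast_val]
      rw [hj, ZMod.val_natCast, Nat.mod_eq_of_lt (by omega)]
    intro k₁ k₂ e
    simp only [if_neg hw, add_zero] at e
    by_cases hle : j.val < N
    · have key : ∀ k, rf N h a j k * a j * rf N h a (j+1) k
          = Bf a j.val * (h k * h k) * (Bf a (j.val+1))⁻¹ := by
        intro k
        rw [rf, if_pos (by omega), rf, succval, if_pos (by omega), bf_succ, zmod_cast_val]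
        group
      rw [key k₁, key k₂] at e
      exact hinj (sqinj _ _ (hmem _) (hmem _) (mul_left_cancel (mul_right_cancel e)))
    · by_cases heq : j.val = N
      · have key : ∀ k, rf N h a j k * a j * rf N h a (j+1) k
            = Bf a N * (h k * h (k+1)) * ((Bf a N)⁻¹ * a ((N : ℕ) : ZMod n)) := by
          intro k
          rw [rf, if_pos (by omega), rf, succval, if_neg (by omega),
            show n - (j.val + 1) = N from by omega, heq,
            show j = ((N:ℕ) : ZMod n) from by rw [← heq, zmod_cast_val]]
          group
        rw [key k₁, key k₂] at e
        exact hpinj (mul_left_cancel (mul_right_cancel e))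
      · -- N < j.val < n-1
        obtain ⟨w, hw2⟩ : ∃ w, n - j.val = w + 1 := ⟨n - j.val - 1, by omega⟩
        have haj : a j = (a ((n - j.val : ℕ) : ZMod n))⁻¹ := by
          rw [cast_sub_val j (le_of_lt hv), aneg j, inv_inv]
        have hBs : Bf a (n - j.val) = (a ((w : ℕ) : ZMod n))⁻¹ * Bf a w := by
          rw [hw2]; rfl
        have key : ∀ k, rf N h a j k * a j * rf N h a (j+1) k
            = ((a ((n - j.val : ℕ) : ZMod n))⁻¹ * ((a ((w : ℕ) : ZMod n))⁻¹ * Bf a w)) *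
              (h (k+1) * h (k+1)) * ((Bf a w)⁻¹ * a ((w : ℕ) : ZMod n)) := by
          intro k
          rw [rf, if_neg (by omega), rf, succval, if_neg (by omega),
            show n - (j.val + 1) = w from by omega, haj, hBs]
          group
        rw [key k₁, key k₂] at e
        have e2 := mul_left_cancel (mul_right_cancel e)
        exact add_right_cancel (hinj (sqinj _ _ (hmem _) (hmem _) e2))

end Defs

section Coord

private lemma cast_mod_dvd {n ℓ : ℕ} (hd : n ∣ ℓ) (x : ℕ) :
    ((x % ℓ : ℕ) : ZMod n) = (x : ZMod n) := by
  have h0 : (ℓ : ZMod n) = 0 := by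
    obtain ⟨c, rfl⟩ := hd
    push_cast
    simp [ZMod.natCast_self]
  conv_rhs => rw [← Nat.div_add_mod x ℓ]
  push_cast [h0]
  simp

private def jcf (ℓ n : ℕ) (i : ZMod ℓ) : ZMod n := ((i.val : ℕ) : ZMod n)
private def kcf (ℓ n m : ℕ) (i : ZMod ℓ) : ZMod m := ((i.val / n : ℕ) : ZMod m)

variable {ℓ n m : ℕ} [NeZero ℓ] [NeZero n] [NeZero m]

private lemma jc_val (i : ZMod ℓ) : (jcf ℓ n i).val = i.val % n := by
  rw [jcf, ZMod.val_natCast]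

private lemma kc_val (hl : ℓ = n * m) (i : ZMod ℓ) : (kcf ℓ n m i).val = i.val / n := by
  have hn : 0 < n := Nat.pos_of_ne_zero (NeZero.ne n)
  rw [kcf, ZMod.val_natCast, Nat.mod_eq_of_lt]
  rw [Nat.div_lt_iff_lt_mul hn, mul_comm]
  exact hl ▸ ZMod.val_lt i

private lemma val_add_one (i : ZMod ℓ) : (i + 1).val = (i.val + 1) % ℓ := by
  have h1 : ((i.val + 1 : ℕ) : ZMod ℓ) = i + 1 := by
    rw [Nat.cast_succ, zmod_cast_val]
  rw [← h1, ZMod.val_natCast]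

private lemma jc_add_one (hl : ℓ = n * m) (i : ZMod ℓ) :
    jcf ℓ n (i + 1) = jcf ℓ n i + 1 := by
  rw [jcf, val_add_one, cast_mod_dvd ⟨m, hl⟩, Nat.cast_succ, jcf]

private lemma jc_neg (hl : ℓ = n * m) (i : ZMod ℓ) : jcf ℓ n (-i) = - jcf ℓ n i := by
  have h0 : (ℓ : ZMod n) = 0 := by
    rw [hl]; push_cast; simp [ZMod.natCast_self]
  by_cases hi : i = 0
  · simp [hi, jcf, ZMod.val_zero]
  · rw [jcf, jcf, neg_val_of_ne hi, Nat.cast_sub (le_of_lt (ZMod.val_lt i)), h0, zero_sub]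

private lemma coord_ext (hl : ℓ = n * m) (i i' : ZMod ℓ)
    (hj : jcf ℓ n i = jcf ℓ n i') (hk : kcf ℓ n m i = kcf ℓ n m i') : i = i' := by
  have e1 : i.val % n = i'.val % n := by
    have := congrArg ZMod.val hj; rwa [jc_val, jc_val] at this
  have e2 : i.val / n = i'.val / n := by
    have := congrArg ZMod.val hk; rwa [kc_val hl, kc_val hl] at this
  have : i.val = i'.val := by
    calc i.val = n * (i.val / n) + i.val % n := (Nat.div_add_mod _ _).symm
    _ = n * (i'.val / n) + i'.val % n := by rw [e1, e2]
    _ = i'.val := Nat.div_add_mod _ _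
  rw [← zmod_cast_val i, ← zmod_cast_val i', this]

private lemma kc_add_one (hl : ℓ = n * m) (i : ZMod ℓ) :
    kcf ℓ n m (i + 1) = kcf ℓ n m i + (if (jcf ℓ n i).val = n - 1 then 1 else 0) := by
  have hn : 0 < n := Nat.pos_of_ne_zero (NeZero.ne n)
  have hm : 0 < m := Nat.pos_of_ne_zero (NeZero.ne m)
  have ht : i.val < ℓ := ZMod.val_lt i
  have h3 := Nat.div_add_mod i.val n
  by_cases hb : i.val % n = n - 1
  · rw [jc_val, if_pos hb]
    by_cases ht1 : i.val + 1 = ℓ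
    · have hv0 : (i + 1).val = 0 := by rw [val_add_one, ht1, Nat.mod_self]
      have hdiv : i.val / n = m - 1 := by
        have heq : i.val = n * (m - 1) + (n - 1) := by
          have : n * (m - 1) + n * 1 = n * m := by rw [← Nat.mul_add]; congr 1; omega
          omega
        rw [heq, Nat.mul_add_div hn, Nat.div_eq_of_lt (by omega)]
        omega
      rw [kcf, hv0, kcf, hdiv]
      rw [show ((0 / n : ℕ) : ZMod m) = ((0 : ℕ) : ZMod m) from by rw [Nat.zero_div],
        show (((m - 1 : ℕ) : ZMod m)) + 1 = ((m - 1 + 1 : ℕ) : ZMod m) from by push_cast; ring,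
        show m - 1 + 1 = m from by omega, ZMod.natCast_self, Nat.cast_zero]
    · have hv : (i + 1).val = i.val + 1 := by
        rw [val_add_one, Nat.mod_eq_of_lt (by omega)]
      have hdvd : n ∣ i.val + 1 := ⟨i.val / n + 1, by rw [Nat.mul_add, Nat.mul_one]; omega⟩
      rw [kcf, hv, Nat.succ_div, if_pos hdvd, kcf]
      push_cast
      ring
  · rw [jc_val, if_neg hb]
    have ht1 : i.val + 1 < ℓ := by
      rcases Nat.lt_or_ge (i.val + 1) ℓ with h | h
      · exact h
      · exfalso
        have hieq : i.val = n * (m - 1) + (n - 1) := by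
          have : n * (m - 1) + n * 1 = n * m := by rw [← Nat.mul_add]; congr 1; omega
          omega
        have : i.val % n = n - 1 := by
          rw [hieq, Nat.mul_add_mod]
          exact Nat.mod_eq_of_lt (by omega)
        exact hb this
    have hv : (i + 1).val = i.val + 1 := by rw [val_add_one, Nat.mod_eq_of_lt ht1]
    have hndvd : ¬ n ∣ i.val + 1 := by
      intro ⟨c, hc⟩
      have hc1 : 1 ≤ c := by
        rcases Nat.eq_zero_or_pos c with rfl | h
        · omega
        · exact h
      have : n * (c - 1) + n * 1 = n * c := by rw [← Nat.mul_add]; congr 1; omega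
      have hmod : i.val % n = n - 1 := by
        have hrepr : i.val = n * (c - 1) + (n - 1) := by omega
        rw [hrepr, Nat.mul_add_mod]
        exact Nat.mod_eq_of_lt (by omega)
      exact hb hmod
    rw [kcf, hv, Nat.succ_div, if_neg hndvd, kcf]
    simp

private lemma kc_neg_zero (hl : ℓ = n * m) (i : ZMod ℓ) (hi : i ≠ 0)
    (hb : jcf ℓ n i = 0) : kcf ℓ n m (-i) = - kcf ℓ n m i := by
  have hn : 0 < n := Nat.pos_of_ne_zero (NeZero.ne n)
  have hm : 0 < m := Nat.pos_of_ne_zero (NeZero.ne m)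
  have ht : i.val < ℓ := ZMod.val_lt i
  have h3 := Nat.div_add_mod i.val n
  have hr : i.val % n = 0 := by
    have := congrArg ZMod.val hb; rwa [jc_val, ZMod.val_zero] at this
  have hq : i.val / n ≤ m := by
    have : i.val / n < m := by rw [Nat.div_lt_iff_lt_mul hn, mul_comm]; exact hl ▸ ht
    omega
  have hneg : (-i).val = ℓ - i.val := neg_val_of_ne hi
  have hmul : n * (m - i.val / n) + n * (i.val / n) = n * m := by
    rw [← Nat.mul_add]; congr 1; omega
  have hrep : ℓ - i.val = n * (m - i.val / n) := by omega
  rw [kcf, hneg, hrep, Nat.mul_div_cancel_left _ hn, Nat.cast_sub hq, ZMod.natCast_self,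
    zero_sub, kcf]

private lemma kc_neg_pos (hl : ℓ = n * m) (i : ZMod ℓ) (hi : i ≠ 0)
    (hb : jcf ℓ n i ≠ 0) : kcf ℓ n m (-i) = - kcf ℓ n m i - 1 := by
  have hn : 0 < n := Nat.pos_of_ne_zero (NeZero.ne n)
  have hm : 0 < m := Nat.pos_of_ne_zero (NeZero.ne m)
  have ht : i.val < ℓ := ZMod.val_lt i
  have hr : i.val % n ≠ 0 := by
    intro h0
    apply hb
    apply (ZMod.val_eq_zero _).mp
    rw [jc_val, h0]
  obtain ⟨q, r, hqr, hrn⟩ : ∃ q r, i.val = n * q + r ∧ r < n :=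
    ⟨i.val / n, i.val % n, (Nat.div_add_mod _ _).symm, Nat.mod_lt _ hn⟩
  have hqv : i.val / n = q := by
    rw [hqr, Nat.mul_add_div hn, Nat.div_eq_of_lt hrn]
    omega
  have hrv : i.val % n = r := by rw [hqr, Nat.mul_add_mod, Nat.mod_eq_of_lt hrn]
  have hr1 : 1 ≤ r := by omega
  have hqm : q < m := by
    by_contra hx
    have := Nat.mul_le_mul_left n (le_of_not_gt hx)
    omega
  have hmul : n * (m - q - 1) + n * q + n = n * m := by
    have h5 : n * (m - q - 1) + n * (q + 1) = n * m := by rw [← Nat.mul_add]; congr 1; omega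
    rw [Nat.mul_add, Nat.mul_one] at h5; omega
  have hneg : (-i).val = ℓ - i.val := neg_val_of_ne hi
  have hdiv : (ℓ - i.val) / n = m - q - 1 := by
    rw [show ℓ - i.val = n * (m - q - 1) + (n - r) from by omega, Nat.mul_add_div hn,
      Nat.div_eq_of_lt (by omega)]
    omega
  rw [kcf, hneg, hdiv, kcf, hqv, show m - q - 1 = m - (q + 1) from by omega,
    Nat.cast_sub (by omega : q + 1 ≤ m), ZMod.natCast_self, zero_sub]
  push_cast
  ring

end Coord

private lemma aux {G : Type*} [Group G] [Finite G] (H : Subgroup G) [H.Normal]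
    {m n N : ℕ} [NeZero n] [NeZero m] (hn : n = 2*N+1)
    (hcard : Nat.card G = n * m)
    (h : ZMod m → G) (q : ZMod n → G ⧸ H)
    (hmem : ∀ k, h k ∈ H)
    (hinj : Function.Injective h)
    (hpinj : Function.Injective (fun k => h k * h (k+1)))
    (hneg : ∀ k, h (-k) = (h k)⁻¹)
    (sqinj : ∀ x y : G, x ∈ H → y ∈ H → x * x = y * y → x = y)
    (qinj : Function.Injective q)
    (qpinj : Function.Injective (fun j => q j * q (j+1)))
    (a : ZMod n → G)
    (a0 : a 0 = 1)
    (aneg : ∀ j, a (-j) = (a j)⁻¹)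
    (amk : ∀ j, ((a j : G) : G ⧸ H) = q j) :
    IsSymmetricHarmonious G := by
  haveI : NeZero (Nat.card G) := ⟨by
    rw [hcard]; exact Nat.mul_ne_zero (NeZero.ne n) (NeZero.ne m)⟩
  have rfz : ∀ k, rf N h a 0 k = h k := by
    intro k
    rw [rf, if_pos (by simp [ZMod.val_zero])]
    simp only [ZMod.val_zero]
    rw [show Bf a 0 = 1 from rfl]
    group
  have gmk : ∀ i0 : ZMod (Nat.card G),
      ((rf N h a (jcf (Nat.card G) n i0) (kcf (Nat.card G) n m i0) *
        a (jcf (Nat.card G) n i0) : G) : G ⧸ H) = q (jcf (Nat.card G) n i0) := by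
    intro i0
    rw [QuotientGroup.mk_mul, (QuotientGroup.eq_one_iff _).mpr (rf_mem N H h a hmem _ _),
      one_mul, amk]
  refine ⟨fun i => rf N h a (jcf (Nat.card G) n i) (kcf (Nat.card G) n m i) *
      a (jcf (Nat.card G) n i), ?_, ?_, ?_⟩
  · rw [Nat.bijective_iff_injective_and_card]
    constructor
    · intro i i' e
      dsimp only at e
      have ej : jcf (Nat.card G) n i = jcf (Nat.card G) n i' := by
        apply qinj
        rw [← gmk i, ← gmk i', e]
      rw [ej] at e
      have ek := rf_inj N h a hinj _ (mul_right_cancel e)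
      exact coord_ext hcard i i' ej ek
    · simp [Nat.card_zmod]
  · rw [Nat.bijective_iff_injective_and_card]
    constructor
    · intro i i' e
      dsimp only at e
      have hsucc : ∀ i0 : ZMod (Nat.card G),
          rf N h a (jcf (Nat.card G) n (i0+1)) (kcf (Nat.card G) n m (i0+1)) *
            a (jcf (Nat.card G) n (i0+1))
          = rf N h a (jcf (Nat.card G) n i0 + 1)
              (kcf (Nat.card G) n m i0 + (if (jcf (Nat.card G) n i0).val = n-1 then 1 else 0)) *
            a (jcf (Nat.card G) n i0 + 1) := by
        intro i0
        rw [jc_add_one hcard, kc_add_one hcard]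
      rw [hsucc i, hsucc i'] at e
      have ej : jcf (Nat.card G) n i = jcf (Nat.card G) n i' := by
        apply qpinj
        show q (jcf (Nat.card G) n i) * q (jcf (Nat.card G) n i + 1)
          = q (jcf (Nat.card G) n i') * q (jcf (Nat.card G) n i' + 1)
        have em := congrArg (QuotientGroup.mk (s := H)) e
        have hone : ∀ (j : ZMod n) (k : ZMod m), ((rf N h a j k : G) : G ⧸ H) = 1 :=
          fun j k => (QuotientGroup.eq_one_iff _).mpr (rf_mem N H h a hmem j k)
        simp only [QuotientGroup.mk_mul, hone, one_mul, amk] at em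
        exact em
      rw [ej] at e
      simp only [← mul_assoc] at e
      have e2 := mul_right_cancel e
      have ek := rf_prod_inj hn H h a hmem hinj hpinj sqinj a0 aneg
        (jcf (Nat.card G) n i') e2
      exact coord_ext hcard i i' ej ek
    · simp [Nat.card_zmod]
  · intro i hi
    dsimp only
    rw [jc_neg hcard]
    by_cases hJ : jcf (Nat.card G) n i = 0
    · rw [hJ, neg_zero, kc_neg_zero hcard i hi hJ, rfz, rfz, a0, hneg]
      group
    · rw [kc_neg_pos hcard i hi hJ, rf_symm hn h a hneg aneg _ hJ, aneg]
      group

private lemma zmod_self_eq_zero {c : ℕ} (hc : Odd c) {x : ZMod c} (hx : x + x = 0) :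
    x = 0 := by
  have h2 : ((2*((c+1)/2) : ℕ) : ZMod c) = 1 := by
    rw [show 2*((c+1)/2) = c + 1 from by obtain ⟨t, ht⟩ := hc; omega]
    push_cast
    simp [ZMod.natCast_self]
  calc x = 1 * x := (one_mul x).symm
  _ = ((2*((c+1)/2) : ℕ) : ZMod c) * x := by rw [h2]
  _ = (((c+1)/2 : ℕ) : ZMod c) * (x + x) := by push_cast; ring
  _ = 0 := by rw [hx, mul_zero]

private lemma sym_zero {K : Type*} [Group K] {c : ℕ} (hc : Odd c)
    (g : ZMod c → K) (hsurj : Function.Surjective g) (hinj : Function.Injective g)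
    (hsym : ∀ x : ZMod c, x ≠ 0 → g x * g (-x) = 1) : g 0 = 1 := by
  obtain ⟨x, hx⟩ := hsurj 1
  by_cases h0 : x = 0
  · rw [h0] at hx; exact hx
  · exfalso
    have h2 := hsym x h0
    have h3 : g (-x) = g x := by
      rw [hx] at h2 ⊢
      rw [← h2]; group
    have h4 : -x = x := hinj h3
    have h5 : x + x = 0 := by
      nth_rewrite 1 [← h4]; group
    exact h0 (zmod_self_eq_zero hc h5)

theorem stmt3 (G : Type*) [Group G] [Finite G] (H : Subgroup G) [H.Normal]
    (hH : Odd (Nat.card H)) (hQ : Odd (Nat.card (G ⧸ H)))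
    (h1 : IsSymmetricHarmonious H) (h2 : IsSymmetricHarmonious (G ⧸ H)) :
    IsSymmetricHarmonious G := by
  classical
  obtain ⟨gH, ⟨gHinj, gHsurj⟩, ⟨pHinj, _⟩, gHsym⟩ := h1
  obtain ⟨gQ, ⟨gQinj, gQsurj⟩, ⟨pQinj, _⟩, gQsym⟩ := h2
  obtain ⟨N, hN⟩ := hQ
  haveI : NeZero (Nat.card (G ⧸ H)) := ⟨by omega⟩
  haveI : NeZero (Nat.card H) := ⟨by
    have := Nat.card_pos (α := H); omega⟩
  have hcard : Nat.card G = Nat.card (G ⧸ H) * Nat.card H :=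
    Subgroup.card_eq_card_quotient_mul_card_subgroup H
  have gH0 : gH 0 = 1 := sym_zero hH gH gHsurj gHinj gHsym
  have gQ0 : gQ 0 = 1 := sym_zero ⟨N, hN⟩ gQ gQsurj gQinj gQsym
  have gHneg : ∀ k, gH (-k) = (gH k)⁻¹ := by
    intro k
    by_cases hk : k = 0
    · rw [hk, neg_zero, gH0, inv_one]
    · exact eq_inv_of_mul_eq_one_right (gHsym k hk)
  have gQneg : ∀ j, gQ (-j) = (gQ j)⁻¹ := by
    intro j
    by_cases hj : j = 0
    · rw [hj, neg_zero, gQ0, inv_one]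
    · exact eq_inv_of_mul_eq_one_right (gQsym j hj)
  -- the H-sequence in G
  have hmem : ∀ k : ZMod (Nat.card H), ((gH k : H) : G) ∈ H := fun k => (gH k).2
  have hinj : Function.Injective (fun k : ZMod (Nat.card H) => ((gH k : H) : G)) :=
    fun k k' e => gHinj (Subtype.ext e)
  have hpinj : Function.Injective
      (fun k : ZMod (Nat.card H) => ((gH k : H) : G) * ((gH (k+1) : H) : G)) := by
    intro k k' e
    apply pHinj
    apply Subtype.ext
    push_cast
    exact e
  have hneg : ∀ k : ZMod (Nat.card H), ((gH (-k) : H) : G) = (((gH k : H) : G))⁻¹ := by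
    intro k
    simp [gHneg k]
  -- squaring injective on H
  have sqinj : ∀ x y : G, x ∈ H → y ∈ H → x * x = y * y → x = y := by
    intro x y hx hy e
    have e2 : (⟨x, hx⟩ : H) ^ 2 = (⟨y, hy⟩ : H) ^ 2 := by
      rw [pow_two, pow_two]
      exact Subtype.ext (by push_cast; exact e)
    have key : ∀ u : H, u ^ (Nat.card H + 1) = u := by
      intro u
      rw [pow_succ, pow_card_eq_one', one_mul]
    have e4 : (⟨x, hx⟩ : H) ^ (Nat.card H + 1) = (⟨y, hy⟩ : H) ^ (Nat.card H + 1) := by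
      rw [show Nat.card H + 1 = 2 * ((Nat.card H + 1)/2) from by
        obtain ⟨t, ht⟩ := hH; omega, pow_mul, pow_mul, e2]
    rw [key, key] at e4
    exact congrArg Subtype.val e4
  -- section of gQ
  have aux_a : ∃ a : ZMod (Nat.card (G ⧸ H)) → G,
      a 0 = 1 ∧ (∀ j, a (-j) = (a j)⁻¹) ∧ (∀ j, ((a j : G) : G ⧸ H) = gQ j) := by
    refine ⟨fun j => if j = 0 then 1 else
      if j.val ≤ N then (gQ j).out else ((gQ (-j)).out)⁻¹, by simp, ?_, ?_⟩
    · intro j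
      dsimp only
      by_cases hj : j = 0
      · rw [hj, neg_zero]; simp
      · have hjn : ¬ (-j = 0) := by simpa using hj
        have hv1 : 1 ≤ j.val := by
          rcases Nat.eq_zero_or_pos j.val with h0 | h0
          · exact absurd ((ZMod.val_eq_zero j).mp h0) hj
          · exact h0
        have hvlt : j.val < Nat.card (G ⧸ H) := ZMod.val_lt j
        have hnegval : (-j).val = Nat.card (G ⧸ H) - j.val := neg_val_of_ne hj
        rw [if_neg hjn, if_neg hj]
        by_cases hv : j.val ≤ N
        · rw [if_neg (by omega), if_pos hv, neg_neg]
        · rw [if_pos (by omega), if_neg hv, inv_inv]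
    · intro j
      dsimp only
      by_cases hj : j = 0
      · rw [if_pos hj, hj, gQ0]
        rfl
      · rw [if_neg hj]
        by_cases hv : j.val ≤ N
        · rw [if_pos hv, QuotientGroup.out_eq']
        · rw [if_neg hv]
          calc ((((gQ (-j)).out)⁻¹ : G) : G ⧸ H) = (((gQ (-j)).out : G) : G ⧸ H)⁻¹ := by
                rw [QuotientGroup.mk_inv]
          _ = (gQ (-j))⁻¹ := by rw [QuotientGroup.out_eq']
          _ = gQ j := by rw [gQneg j, inv_inv]
  obtain ⟨a, a0, aneg, amk⟩ := aux_a
  exact aux H hN hcard (fun k => ((gH k : H) : G)) gQ hmem hinj hpinj hneg sqinj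
    gQinj pQinj a a0 aneg amk
end

section
/- If φ is a complete mapping of a finite group G of order ℓ that acts as a single ℓ-cycle on G, then for every g ∈ G the sequence g, φ(g), φ²(g), ..., φ^{ℓ-1}(g) is a harmonious sequence in G. -/
theorem stmt8 (G : Type*) [Group G] [Finite G]
    (φ : G → G) (hφ : Function.Bijective φ)
    (hcm : Function.Bijective (fun x => x * φ x))
    (hcycle : ∀ x y : G, ∃ n : ℕ, φ^[n] x = y) (g : G) :
    Function.Bijective (fun i : ZMod (Nat.card G) => φ^[i.val] g) ∧
      Function.Bijective
        (fun i : ZMod (Nat.card G) => φ^[i.val] g * φ^[(i + 1).val] g) := by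
  have hℓ : 0 < Nat.card G := Nat.card_pos
  haveI : NeZero (Nat.card G) := ⟨hℓ.ne'⟩
  -- g is a periodic point
  have hper : g ∈ Function.periodicPts φ := by
    obtain ⟨m, n, hne, hmn⟩ := Finite.exists_ne_map_eq_of_infinite (fun n : ℕ => φ^[n] g)
    rcases hne.lt_or_gt with h | h
    · refine Function.mk_mem_periodicPts (Nat.sub_pos_of_lt h) ?_
      have : φ^[m] (φ^[n - m] g) = φ^[m] g := by
        rw [← Function.iterate_add_apply, Nat.add_sub_cancel' h.le]
        exact hmn.symm
      exact (hφ.injective.iterate m) this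
    · refine Function.mk_mem_periodicPts (Nat.sub_pos_of_lt h) ?_
      have : φ^[n] (φ^[m - n] g) = φ^[n] g := by
        rw [← Function.iterate_add_apply, Nat.add_sub_cancel' h.le]
        exact hmn
      exact (hφ.injective.iterate n) this
  set p := Function.minimalPeriod φ g with hp
  have hppos : 0 < p := Function.minimalPeriod_pos_of_mem_periodicPts hper
  -- p = Nat.card G
  have hsurjFin : Function.Surjective (fun k : Fin p => φ^[(k : ℕ)] g) := by
    intro y
    obtain ⟨n, hn⟩ := hcycle g y
    refine ⟨⟨n % p, Nat.mod_lt _ hppos⟩, ?_⟩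
    show φ^[n % p] g = y
    rw [Function.iterate_mod_minimalPeriod_eq]
    exact hn
  have hinjFin : Function.Injective (fun k : Fin p => φ^[(k : ℕ)] g) := by
    intro a b hab
    exact Fin.ext (Function.iterate_injOn_Iio_minimalPeriod a.2 b.2 hab)
  have hpcard : p = Nat.card G := by
    have h1 : p ≤ Nat.card G := by
      have := Nat.card_le_card_of_injective _ hinjFin
      simpa using this
    have h2 : Nat.card G ≤ p := by
      have := Nat.card_le_card_of_surjective _ hsurjFin
      simpa using this
    omega
  -- main map
  have key : ∀ n : ℕ, φ^[n % Nat.card G] g = φ^[n] g := by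
    intro n
    rw [← hpcard]
    exact Function.iterate_mod_minimalPeriod_eq
  have hinj : Function.Injective (fun i : ZMod (Nat.card G) => φ^[i.val] g) := by
    intro a b hab
    have ha := ZMod.val_lt a
    have hb := ZMod.val_lt b
    have ha' : a.val < p := by omega
    have hb' : b.val < p := by omega
    have := Function.iterate_injOn_Iio_minimalPeriod ha' hb' hab
    exact ZMod.val_injective _ this
  have hsurj : Function.Surjective (fun i : ZMod (Nat.card G) => φ^[i.val] g) := by
    intro y
    obtain ⟨n, hn⟩ := hcycle g y
    refine ⟨(n : ZMod (Nat.card G)), ?_⟩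
    simp only [ZMod.val_natCast]
    rw [key]
    exact hn
  have hbij : Function.Bijective (fun i : ZMod (Nat.card G) => φ^[i.val] g) := ⟨hinj, hsurj⟩
  refine ⟨hbij, ?_⟩
  have heq : (fun i : ZMod (Nat.card G) => φ^[i.val] g * φ^[(i + 1).val] g)
      = (fun x => x * φ x) ∘ (fun i : ZMod (Nat.card G) => φ^[i.val] g) := by
    funext i
    simp only [Function.comp_apply]
    congr 1
    have : (i + 1).val = (i.val + 1) % Nat.card G := by
      rw [ZMod.val_add]
      simp [ZMod.val_one_eq_one_mod]
    rw [this, key, Function.iterate_succ_apply']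
  rw [heq]
  exact hcm.comp hbij
end

section
/- If g_0, ..., g_{ℓ-1} is a symmetric harmonious sequence in a finite group G of order ℓ, then there exists an index i with g_{i-1} g_i = 1 (indices mod ℓ), and for such i one has g_{i-1} = g_{ℓ-i}. -/
theorem stmt9 (G : Type*) [Group G] [Finite G]
    (g : ZMod (Nat.card G) → G) (hbij : Function.Bijective g)
    (hprod : Function.Bijective (fun i => g i * g (i + 1)))
    (hsymm : ∀ i : ZMod (Nat.card G), i ≠ 0 → g i * g (-i) = 1) :
    (∃ i : ZMod (Nat.card G), g (i - 1) * g i = 1) ∧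
      ∀ i : ZMod (Nat.card G), g (i - 1) * g i = 1 → g (i - 1) = g (-i) := by
  constructor
  · obtain ⟨j, hj⟩ := hprod.surjective 1
    exact ⟨j + 1, by simpa using hj⟩
  · intro i hi
    rcases eq_or_ne i 0 with rfl | hi0
    · by_cases h1 : (1 : ZMod (Nat.card G)) = 0
      · haveI : NeZero (Nat.card G) := ⟨Nat.card_pos.ne'⟩
        have hcard : Nat.card G = 1 := Nat.dvd_one.mp
          ((ZMod.natCast_eq_zero_iff 1 (Nat.card G)).mp (by simpa using h1))
        haveI : Subsingleton G := by
          rw [Nat.card_eq_one_iff_unique] at hcard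
          exact hcard.1
        exact Subsingleton.elim _ _
      · have hneg : (-1 : ZMod (Nat.card G)) ≠ 0 := by
          simpa [neg_eq_zero] using h1
        have h2 := hsymm (-1) hneg
        simp only [neg_neg] at h2
        have : g (0 - 1) * g 0 = g (-1) * g 1 := by rw [h2]; simpa using hi
        have h3 : g 0 = g 1 := by
          have := mul_left_cancel (a := g (-1)) (by simpa using this)
          exact this
        exact absurd (hbij.injective h3) (by simpa using (Ne.symm h1))
    · have h2 := hsymm i hi0
      have e1 : g (i - 1) = (g i)⁻¹ := eq_inv_of_mul_eq_one_left hi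
      have e2 : g (-i) = (g i)⁻¹ := by
        have := eq_inv_of_mul_eq_one_right h2
        exact this
      rw [e1, e2]
end

section
/- The cyclic group Z_n for odd n ≥ 1 is symmetric harmonious: the sequence g_i = i·(n+1)/2 mod n, for i = 0, ..., n-1, is a permutation of Z_n whose consecutive sums g_i + g_{i+1} (indices mod n) form a permutation of Z_n and which satisfies g_i + g_{n-i} = 0 for 1 ≤ i ≤ n-1. -/
theorem stmt12 (n : ℕ) (hn : 1 ≤ n) (hodd : Odd n)
    (g : ZMod n → ZMod n) (hg : ∀ i, g i = i * (((n + 1) / 2 : ℕ) : ZMod n)) :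
    Function.Bijective g ∧
      Function.Bijective (fun i => g i + g (i + 1)) ∧
      ∀ i : ZMod n, i ≠ 0 → g i + g (-i) = 0 := by
  set c : ZMod n := (((n + 1) / 2 : ℕ) : ZMod n) with hc
  have hdvd : 2 ∣ n + 1 := by
    obtain ⟨k, hk⟩ := hodd; omega
  have hmul : ((n + 1) / 2) * 2 = n + 1 := Nat.div_mul_cancel hdvd
  have h2 : c * 2 = 1 := by
    have : ((((n + 1) / 2) * 2 : ℕ) : ZMod n) = ((n + 1 : ℕ) : ZMod n) := by rw [hmul]
    push_cast at this
    simpa [ZMod.natCast_self] using this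
  refine ⟨?_, ?_, ?_⟩
  · rw [Function.bijective_iff_has_inverse]
    refine ⟨fun j => j * 2, fun i => ?_, fun j => ?_⟩ <;> simp only [hg]
    · linear_combination i * h2
    · linear_combination j * h2
  · rw [Function.bijective_iff_has_inverse]
    refine ⟨fun j => j - c, fun i => ?_, fun j => ?_⟩ <;> simp only [hg]
    · linear_combination i * h2
    · linear_combination (j - c) * h2
  · intro i hi
    rw [hg, hg]; ring
end

section
/- Every finite abelian group of odd order is symmetric harmonious. -/
lemma SH_sq_eq_one {H : Type*} [Group H] [Finite H] (hm : Odd (Nat.card H))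
    {x : H} (hx : x * x = 1) : x = 1 := by
  have h1 : orderOf x ∣ 2 := orderOf_dvd_of_pow_eq_one (by rwa [pow_two])
  have h2 : orderOf x ∣ Nat.card H := orderOf_dvd_natCard x
  rcases (Nat.dvd_prime Nat.prime_two).mp h1 with h | h
  · exact orderOf_eq_one_iff.mp h
  · rw [h] at h2
    rw [Nat.odd_iff] at hm
    omega

lemma SH_congr {G G' : Type*} [Group G] [Finite G] [Group G'] [Finite G'] (e : G ≃* G')
    (hG' : IsSymmetricHarmonious G') : IsSymmetricHarmonious G := by
  have hcard : Nat.card G = Nat.card G' := Nat.card_congr e.toEquiv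
  rw [IsSymmetricHarmonious, hcard]
  obtain ⟨g, h1, h2, h3⟩ := hG'
  refine ⟨fun i => e.symm (g i), e.symm.bijective.comp h1, ?_, ?_⟩
  · have : (fun i => e.symm (g i) * e.symm (g (i + 1)))
        = fun i => e.symm (g i * g (i + 1)) := by
      funext i; rw [map_mul]
    rw [this]
    exact e.symm.bijective.comp h2
  · intro i hi
    rw [← map_mul, h3 i hi, map_one]

lemma SH_subsingleton (G : Type*) [Group G] [Finite G] [Subsingleton G] :
    IsSymmetricHarmonious G := by
  haveI : Subsingleton (ZMod (Nat.card G)) := by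
    have h1 : Nat.card G = 1 := Nat.card_eq_one_iff_unique.mpr ⟨inferInstance, inferInstance⟩
    rw [h1]
    infer_instance
  have hbij : ∀ f : ZMod (Nat.card G) → G, Function.Bijective f := by
    intro f
    refine ⟨fun a b _ => Subsingleton.elim a b, fun y => ⟨0, Subsingleton.elim _ _⟩⟩
  exact ⟨fun _ => 1, hbij _, hbij _, fun i _ => mul_one 1⟩

lemma SH_step {H : Type*} [CommGroup H] [Finite H] (k : ℕ) [NeZero k] (hk : Odd k)
    (hm : Odd (Nat.card H)) (hSH : IsSymmetricHarmonious H) :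
    IsSymmetricHarmonious (H × Multiplicative (ZMod k)) := by
  have hk0 : k ≠ 0 := NeZero.ne k
  set m := Nat.card H with hmdef
  obtain ⟨h, hbij, hprod, hsym⟩ := hSH
  have hm0 : m ≠ 0 := Nat.card_pos.ne'
  set n := Nat.card (H × Multiplicative (ZMod k)) with hndef
  have hn : n = m * k := by
    rw [hndef, Nat.card_prod]
    congr 1
    exact Nat.card_zmod k
  have hn0 : n ≠ 0 := by simp [hn, hm0, hk0]
  haveI : NeZero n := ⟨hn0⟩
  -- h 0 = 1
  have h0 : h 0 = 1 := by
    obtain ⟨j, hj⟩ := hbij.2 (h 0)⁻¹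
    by_cases hj0 : j = 0
    · subst hj0
      refine SH_sq_eq_one hm ?_
      nth_rewrite 2 [hj]
      exact mul_inv_cancel (h 0)
    · exfalso
      have h1 := hsym j hj0
      have h2 : h (-j) = h 0 := by
        rw [← inv_eq_of_mul_eq_one_right h1, hj, inv_inv]
      exact hj0 (neg_eq_zero.mp (hbij.1 h2))
  obtain ⟨M, hM⟩ := hm
  set mz : ℤ := (m : ℤ) with hmzdef
  set Mz : ℤ := (M : ℤ) with hMzdef
  have hmz : mz = 2 * Mz + 1 := by rw [hmzdef, hMzdef, hM]; push_cast; ring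
  have hmz0 : 0 < mz := by omega
  set c : ℤ → ℤ := fun a => (a + Mz) % mz - Mz with hcdef
  have hc_lb : ∀ a, -Mz ≤ c a := by
    intro a
    have := Int.emod_nonneg (a + Mz) hmz0.ne'
    simp only [hcdef]
    omega
  have hc_ub : ∀ a, c a ≤ Mz := by
    intro a
    have := Int.emod_lt_of_pos (a + Mz) hmz0
    simp only [hcdef]
    omega
  have hc_mod : ∀ a, c a ≡ a [ZMOD mz] := by
    intro a
    have h1 : (a + Mz) % mz ≡ a + Mz [ZMOD mz] := Int.emod_emod_of_dvd _ dvd_rfl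
    simpa only [hcdef, add_sub_cancel_right] using h1.sub_right Mz
  have hc_congr : ∀ a b, a ≡ b [ZMOD mz] → c a = c b := by
    intro a b hab
    have h1 : (a + Mz) % mz = (b + Mz) % mz := hab.add_right Mz
    simp only [hcdef, h1]
  have hc_unique : ∀ a x, -Mz ≤ x → x ≤ Mz → x ≡ a [ZMOD mz] → x = c a := by
    intro a x hx1 hx2 hx3
    have h1 : mz ∣ x - c a := (Int.ModEq.dvd ((hc_mod a).trans hx3.symm))
    have h2 : |x - c a| < mz := by
      have := hc_lb a; have := hc_ub a
      rw [abs_lt]; omega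
    have := Int.eq_zero_of_abs_lt_dvd h1 h2
    omega
  set Q : ℤ → ℤ := fun a => (a - c a) / mz with hQdef
  have hQ : ∀ a, mz * Q a + c a = a := by
    intro a
    have hd : mz ∣ a - c a := (hc_mod a).dvd
    have h2 : mz * Q a = a - c a := Int.mul_ediv_cancel' hd
    omega
  -- key cancellation helper
  have hcancel : ∀ x y : ℤ, mz * x = mz * y → x = y := by
    intro x y hxy
    exact mul_left_cancel₀ hmz0.ne' hxy
  have hnz : (n : ℤ) = mz * (k : ℤ) := by rw [hn]; push_cast; ring
  -- conclusion helper
  have hconc : ∀ a b : ℤ, a ≡ b [ZMOD mz] → Q a ≡ Q b [ZMOD (k : ℤ)] →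
      a ≡ b [ZMOD (n : ℤ)] := by
    intro a b h1 h2
    obtain ⟨t, ht⟩ := h2.dvd
    have hcab : c a = c b := hc_congr a b h1
    have e1 := hQ a; have e2 := hQ b
    rw [Int.modEq_iff_dvd, hnz]
    refine ⟨t, ?_⟩
    calc b - a = mz * Q b + c b - (mz * Q a + c a) := by rw [e1, e2]
    _ = mz * (Q b - Q a) := by rw [hcab]; ring
    _ = mz * ((k : ℤ) * t) := by rw [ht]
    _ = mz * (k : ℤ) * t := by ring
  have hQmod : ∀ a b : ℤ, a ≡ b [ZMOD (n : ℤ)] → Q a ≡ Q b [ZMOD (k : ℤ)] := by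
    intro a b hab
    obtain ⟨t, ht⟩ := hab.dvd
    have hcab : c a = c b := hc_congr a b (hab.of_dvd (by rw [hnz]; exact Dvd.intro _ rfl))
    have e1 := hQ a; have e2 := hQ b
    rw [Int.modEq_iff_dvd]
    refine ⟨t, hcancel _ _ ?_⟩
    calc mz * (Q b - Q a) = mz * Q b + c b - (mz * Q a + c a) := by rw [hcab]; ring
    _ = b - a := by rw [e1, e2]
    _ = (n : ℤ) * t := ht
    _ = mz * ((k : ℤ) * t) := by rw [hnz]; ring
  -- the map
  set F : ℤ → H × Multiplicative (ZMod k) :=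
    fun a => (h ((a : ZMod m)), Multiplicative.ofAdd ((Q a : ZMod k))) with hFdef
  have hF_congr : ∀ a b : ℤ, a ≡ b [ZMOD (n : ℤ)] → F a = F b := by
    intro a b hab
    have hab_m : a ≡ b [ZMOD mz] := hab.of_dvd (by rw [hnz]; exact Dvd.intro _ rfl)
    have h1 : ((a : ZMod m)) = ((b : ZMod m)) := (ZMod.intCast_eq_intCast_iff a b m).mpr hab_m
    have h2 : ((Q a : ZMod k)) = ((Q b : ZMod k)) :=
      (ZMod.intCast_eq_intCast_iff _ _ k).mpr (hQmod a b hab)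
    simp only [hFdef, h1, h2]
  set g : ZMod n → H × Multiplicative (ZMod k) := fun x => F (ZMod.cast x : ℤ) with hgdef
  have hg_spec : ∀ a : ℤ, g ((a : ZMod n)) = F a := by
    intro a
    refine hF_congr _ _ ?_
    rw [← ZMod.intCast_eq_intCast_iff, ZMod.intCast_zmod_cast]
  have hrep : ∀ x : ZMod n, ((ZMod.cast x : ℤ) : ZMod n) = x := fun x =>
    ZMod.intCast_zmod_cast x
  -- injectivity of F up to mod n
  have hFinj : ∀ a b : ℤ, F a = F b → a ≡ b [ZMOD (n : ℤ)] := by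
    intro a b hab
    have h1 : h ((a : ZMod m)) = h ((b : ZMod m)) := congrArg Prod.fst hab
    have h1' : a ≡ b [ZMOD mz] := (ZMod.intCast_eq_intCast_iff a b m).mp (hbij.1 h1)
    have h2 : ((Q a : ZMod k)) = ((Q b : ZMod k)) :=
      Multiplicative.ofAdd.injective (congrArg Prod.snd hab)
    exact hconc a b h1' ((ZMod.intCast_eq_intCast_iff _ _ k).mp h2)
  -- cardinalities
  haveI : Fintype H := Fintype.ofFinite H
  have hcard : Fintype.card (ZMod n) = Fintype.card (H × Multiplicative (ZMod k)) := by
    rw [ZMod.card n, ← Nat.card_eq_fintype_card, ← hndef]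
  -- bijectivity of g
  have hg_bij : Function.Bijective g := by
    rw [Fintype.bijective_iff_injective_and_card]
    refine ⟨?_, hcard⟩
    intro x y hxy
    rw [← hrep x, ← hrep y]
    rw [← hrep x, ← hrep y, hg_spec, hg_spec] at hxy
    exact (ZMod.intCast_eq_intCast_iff _ _ n).mpr (hFinj _ _ hxy)
  -- successor structure
  have hQsucc : ∀ a : ℤ, (c a < Mz → Q (a + 1) = Q a) ∧ (c a = Mz → Q (a + 1) = Q a + 1) := by
    intro a
    constructor
    · intro hca
      have hc1 : c (a + 1) = c a + 1 := by
        refine (hc_unique (a + 1) (c a + 1) (by have := hc_lb a; omega) (by omega) ?_).symm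
        exact (hc_mod a).add_right 1
      have e1 := hQ a; have e2 := hQ (a + 1)
      refine hcancel _ _ ?_
      omega
    · intro hca
      have hc1 : c (a + 1) = -Mz := by
        refine (hc_unique (a + 1) (-Mz) le_rfl (by omega) ?_).symm
        have h1 : (-Mz : ℤ) ≡ Mz + 1 [ZMOD mz] := by
          rw [Int.modEq_iff_dvd]
          exact ⟨1, by omega⟩
        exact h1.trans ((hca ▸ (hc_mod a)).add_right 1)
      have e1 := hQ a; have e2 := hQ (a + 1)
      refine hcancel _ _ ?_
      rw [mul_add, mul_one]
      omega
  -- product computation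
  have hFP : ∀ a : ℤ, F a * F (a + 1) =
      (h ((a : ZMod m)) * h ((a : ZMod m) + 1),
        Multiplicative.ofAdd (((Q a + Q (a + 1) : ℤ) : ZMod k))) := by
    intro a
    have h1 : ((a + 1 : ℤ) : ZMod m) = ((a : ZMod m)) + 1 := by push_cast; ring
    simp only [hFdef, Prod.mk_mul_mk, h1, ← ofAdd_add]
    congr 1
    push_cast
    ring
  -- 2 is a unit mod k
  have h2u : IsUnit (2 : ZMod k) := by
    have h2 : ¬ (2 ∣ k) := by rw [Nat.odd_iff] at hk; omega
    have := (ZMod.isUnit_prime_iff_not_dvd (n := k) Nat.prime_two).mpr h2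
    simpa using this
  have h2cancel : ∀ x y : ZMod k, 2 * x = 2 * y → x = y := fun x y hxy =>
    h2u.mul_left_cancel hxy
  -- bijectivity of products
  have hp_bij : Function.Bijective (fun i => g i * g (i + 1)) := by
    rw [Fintype.bijective_iff_injective_and_card]
    refine ⟨?_, hcard⟩
    intro x y hxy
    simp only at hxy
    rw [← hrep x, ← hrep y]
    set a := (ZMod.cast x : ℤ)
    set b := (ZMod.cast y : ℤ)
    have hxa : x = ((a : ZMod n)) := (hrep x).symm
    have hyb : y = ((b : ZMod n)) := (hrep y).symm
    rw [hxa, hyb] at hxy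
    have hcast : ∀ t : ℤ, ((t : ZMod n)) + 1 = (((t + 1 : ℤ)) : ZMod n) := by
      intro t; push_cast; ring
    rw [hcast, hcast, hg_spec, hg_spec, hg_spec, hg_spec, hFP, hFP] at hxy
    have h1 : h ((a : ZMod m)) * h ((a : ZMod m) + 1)
        = h ((b : ZMod m)) * h ((b : ZMod m) + 1) := congrArg Prod.fst hxy
    have h1' : ((a : ZMod m)) = ((b : ZMod m)) := hprod.1 h1
    have habm : a ≡ b [ZMOD mz] := (ZMod.intCast_eq_intCast_iff a b m).mp h1'
    have hcab : c a = c b := hc_congr a b habm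
    have h2 : (((Q a + Q (a + 1) : ℤ)) : ZMod k) = (((Q b + Q (b + 1) : ℤ)) : ZMod k) :=
      Multiplicative.ofAdd.injective (congrArg Prod.snd hxy)
    -- reduce to Q a ≡ Q b mod k
    have hQab : Q a ≡ Q b [ZMOD (k : ℤ)] := by
      have hub := hc_ub a
      rcases eq_or_lt_of_le hub with hca | hca
      · have ha2 := (hQsucc a).2 hca
        have hb2 := (hQsucc b).2 (hcab ▸ hca)
        rw [ha2, hb2] at h2
        push_cast at h2
        have h4 : ((Q a : ℤ) : ZMod k) = ((Q b : ℤ) : ZMod k) :=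
          h2cancel _ _ (by linear_combination h2)
        exact (ZMod.intCast_eq_intCast_iff _ _ k).mp h4
      · have ha2 := (hQsucc a).1 hca
        have hb2 := (hQsucc b).1 (hcab ▸ hca)
        rw [ha2, hb2] at h2
        push_cast at h2
        have h4 : ((Q a : ℤ) : ZMod k) = ((Q b : ℤ) : ZMod k) :=
          h2cancel _ _ (by linear_combination h2)
        exact (ZMod.intCast_eq_intCast_iff _ _ k).mp h4
    exact (ZMod.intCast_eq_intCast_iff _ _ n).mpr (hconc a b habm hQab)
  -- symmetry
  have hg_sym : ∀ x : ZMod n, x ≠ 0 → g x * g (-x) = 1 := by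
    intro x _
    set a := (ZMod.cast x : ℤ)
    have hxa : x = ((a : ZMod n)) := (hrep x).symm
    have hxna : -((a : ZMod n)) = (((-a : ℤ)) : ZMod n) := by push_cast; ring
    rw [hxa, hxna, hg_spec, hg_spec]
    have hQneg : Q (-a) = -Q a := by
      have hcneg : c (-a) = -c a := by
        refine (hc_unique (-a) (-c a) (by have := hc_ub a; omega)
          (by have := hc_lb a; omega) (hc_mod a).neg).symm
      have e1 := hQ a; have e2 := hQ (-a)
      refine hcancel _ _ ?_
      rw [mul_neg]
      omega
    have hfst : h ((a : ZMod m)) * h (((-a : ℤ) : ZMod m)) = 1 := by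
      have hneg : ((-a : ℤ) : ZMod m) = -((a : ZMod m)) := by push_cast; ring
      rw [hneg]
      by_cases ha : ((a : ZMod m)) = 0
      · rw [ha, neg_zero, h0, mul_one]
      · exact hsym _ ha
    have hsnd : Multiplicative.ofAdd ((Q a : ZMod k)) *
        Multiplicative.ofAdd ((Q (-a) : ZMod k)) = 1 := by
      rw [← ofAdd_add, hQneg]
      push_cast
      rw [add_neg_cancel]
      rfl
    simp only [hFdef, Prod.mk_mul_mk]
    rw [hfst, hsnd]
    rfl
  exact ⟨g, hg_bij, hp_bij, hg_sym⟩
def piSplitEquiv {ι : Type} [DecidableEq ι] (X : ι → Type*) [∀ i, CommGroup (X i)] (i₀ : ι) :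
    (∀ i, X i) ≃* (∀ j : {i // i ≠ i₀}, X j) × X i₀ where
  toFun f := (fun j => f j, f i₀)
  invFun p := fun i => if h : i = i₀ then cast (congrArg X h).symm p.2 else p.1 ⟨i, h⟩
  left_inv f := by
    funext i
    by_cases h : i = i₀
    · subst h; simp
    · simp [h]
  right_inv p := by
    refine Prod.ext ?_ ?_
    · funext j
      simp [j.2]
    · simp
  map_mul' f g := rfl

lemma SH_aux : ∀ (N : ℕ) (G : Type) [CommGroup G] [Finite G],
    Nat.card G = N → Odd N → IsSymmetricHarmonious G := by
  intro N
  induction N using Nat.strong_induction_on with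
  | _ N IH =>
    intro G _ _ hcard hodd
    obtain ⟨ι, hι, nn, hnn, ⟨e⟩⟩ := CommGroup.equiv_prod_multiplicative_zmod_of_finite G
    haveI : ∀ i, NeZero (nn i) := fun i => ⟨by have := hnn i; omega⟩
    cases isEmpty_or_nonempty ι with
    | inl hempty =>
      haveI : Subsingleton G := e.toEquiv.subsingleton
      exact SH_subsingleton G
    | inr hne =>
      classical
      let i₀ := Classical.arbitrary ι
      let e2 := e.trans (piSplitEquiv (fun i => Multiplicative (ZMod (nn i))) i₀)
      have hc : Nat.card G =
          Nat.card (∀ j : {i // i ≠ i₀}, Multiplicative (ZMod (nn j))) * nn i₀ := by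
        rw [Nat.card_congr e2.toEquiv, Nat.card_prod]
        congr 1
        exact Nat.card_zmod (nn i₀)
      have hpos : 0 < Nat.card (∀ j : {i // i ≠ i₀}, Multiplicative (ZMod (nn j))) :=
        Nat.card_pos
    
      have hodds := hc ▸ hcard ▸ hodd
      rw [Nat.odd_mul] at hodds
      have hlt : Nat.card (∀ j : {i // i ≠ i₀}, Multiplicative (ZMod (nn j))) < N := by
        have h2 := hnn i₀
        rw [← hcard, hc]
        nlinarith
      have hsh := IH _ hlt (∀ j : {i // i ≠ i₀}, Multiplicative (ZMod (nn j))) rfl hodds.1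
      exact SH_congr e2 (SH_step (nn i₀) hodds.2 hodds.1 hsh)

theorem stmt13 (G : Type*) [CommGroup G] [Finite G] (h : Odd (Nat.card G)) :
    IsSymmetricHarmonious G := by
  obtain ⟨ι, hι, nn, hnn, ⟨e⟩⟩ := CommGroup.equiv_prod_multiplicative_zmod_of_finite G
  haveI : ∀ i, NeZero (nn i) := fun i => ⟨by have := hnn i; omega⟩
  have hodd' : Odd (Nat.card ((i : ι) → Multiplicative (ZMod (nn i)))) := by
    rwa [← Nat.card_congr e.toEquiv]
  exact SH_congr e (SH_aux _ _ rfl hodd')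
end

section
/- No nontrivial elementary abelian 2-group (Z_2)^n with n ≥ 1 is harmonious. -/
theorem stmt14 (n : ℕ) (hn : 1 ≤ n) :
    ¬ ∃ g : ZMod (Nat.card (Fin n → ZMod 2)) → (Fin n → ZMod 2),
        Function.Bijective g ∧
          Function.Bijective (fun i => g i + g (i + 1)) := by
  rintro ⟨g, hg, hsum⟩
  obtain ⟨i, hi⟩ := hsum.2 0
  have key : ∀ a b : ZMod 2, a + b = 0 → a = b := by decide
  have heq : g i = g (i + 1) := by
    funext x
    exact key _ _ (congrFun hi x)
  have hii : i = i + 1 := hg.1 heq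
  have h1 : (1 : ZMod (Nat.card (Fin n → ZMod 2))) = 0 := (left_eq_add).mp hii
  have hcard : Nat.card (Fin n → ZMod 2) = 2 ^ n := by
    simp [Nat.card_fun, Nat.card_eq_fintype_card]
  have h2 : 2 ≤ Nat.card (Fin n → ZMod 2) := by
    rw [hcard]
    calc 2 = 2 ^ 1 := by norm_num
    _ ≤ 2 ^ n := Nat.pow_le_pow_right (by norm_num) hn
  have : Fact (1 < Nat.card (Fin n → ZMod 2)) := ⟨h2⟩
  exact one_ne_zero h1
end

section
/- If a finite group G admits a complete mapping, then every Sylow 2-subgroup of G is either trivial or non-cyclic. -/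
/-!
Suppose a Sylow 2-subgroup `P` is cyclic and nontrivial. Then 2 is the smallest prime dividing
`|G|`, so Burnside's transfer theorem gives a surjection `G → P` whose kernel has odd order `m`.
For a complete mapping `φ` and any homomorphism `f` to an abelian group,
`∏ f x = ∏ f (x * φ x) = (∏ f x)²`, hence `∏ f x = 1`. For the transfer this product is
`(∏_{y ∈ P} y) ^ m`; but in a cyclic group of even order the product of all elements is the unique
involution, so its odd powers are nontrivial.
-/

open Finset Function

section CompleteMapping

variable {G : Type*} [Group G]

def IsCompleteMapping (φ : G → G) : Prop :=
  Bijective φ ∧ Bijective fun x => x * φ x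

theorem IsCompleteMapping.prod_map_eq_one [Fintype G] {M : Type*} [CommGroup M] {φ : G → G}
    (hφ : IsCompleteMapping φ) (f : G →* M) : ∏ x, f x = 1 := by
  have h_mul : ∏ x, f (x * φ x) = ∏ x, f x := Fintype.prod_bijective _ hφ.2 _ _ fun _ => rfl
  have h_phi : ∏ x, f (φ x) = ∏ x, f x := Fintype.prod_bijective _ hφ.1 _ _ fun _ => rfl
  simp only [map_mul, prod_mul_distrib, h_phi] at h_mul
  exact mul_eq_left.mp h_mul

end CompleteMapping

theorem MonoidHom.prod_univ_eq_pow_card_ker {G H : Type*} [Group G] [CommGroup H] [Fintype G]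
    [Fintype H] {f : G →* H} (hf : Surjective f) : ∏ x, f x = (∏ y, y) ^ Nat.card f.ker := by
  classical
  rw [← prod_fiberwise univ f f, ← prod_pow]
  refine prod_congr rfl fun y _ => ?_
  have h_card : #{x | f x = y} = Nat.card f.ker := by
    rw [← Nat.card_congr (f.fiberEquivKerOfSurjective hf y), ← Fintype.card_subtype,
      Nat.card_eq_fintype_card]
    rfl
  rw [prod_congr rfl fun x hx => (mem_filter.mp hx).2, prod_const, h_card]

theorem IsCyclic.orderOf_prod_univ_eq_two {H : Type*} [CommGroup H] [Fintype H] [IsCyclic H]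
    (hH : Even (Nat.card H)) : orderOf (∏ y : H, y) = 2 := by
  classical
  obtain ⟨a, ha⟩ := IsCyclic.exists_generator (α := H)
  have hn : orderOf a = Nat.card H := orderOf_eq_card_of_forall_mem_zpowers ha
  set n := orderOf a
  set s := ∑ i ∈ range n, i
  have hs : s * 2 = n * (n - 1) := sum_range_id_mul_two n
  have h_prod : ∏ y : H, y = a ^ s := by
    rw [← IsCyclic.image_range_orderOf ha, prod_image fun i hi j hj => pow_injOn_Iio_orderOf
      (by simpa using hi) (by simpa using hj), prod_pow_eq_pow_sum]
  refine h_prod ▸ orderOf_eq_prime ?_ fun h_one => ?_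
  · rw [← pow_mul, hs, pow_mul, pow_orderOf_eq_one, one_pow]
  · obtain ⟨k, hk⟩ := orderOf_dvd_of_pow_eq_one h_one
    have hn_pos : 0 < n := hn ▸ Nat.card_pos
    have : 2 * k = n - 1 := by
      apply Nat.eq_of_mul_eq_mul_left hn_pos
      rw [← hs, hk]; ring
    obtain ⟨t, ht⟩ := hH
    omega

theorem MonoidHom.transferSylow_surjective {G : Type*} [Group G] {p : ℕ} [Fact p.Prime]
    [Finite (Sylow p G)] (P : Sylow p G)
    (hP : Subgroup.normalizer (P : Set G) ≤ Subgroup.centralizer (P : Set G)) [P.FiniteIndex] :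
    Surjective (transferSylow P hP) := fun y => by
  obtain ⟨x, rfl⟩ := (P.2.powEquiv' P.not_dvd_index).surjective y
  exact ⟨x, (transferSylow_eq_pow P hP x x.2).trans rfl⟩

theorem stmt15 (G : Type*) [Group G] [Finite G]
    (h : ∃ φ : G → G, Function.Bijective φ ∧ Function.Bijective (fun x => x * φ x)) :
    ∀ P : Sylow 2 G, (P : Subgroup G) = ⊥ ∨ ¬ IsCyclic (P : Subgroup G) := by
  classical
  have : Fintype G := Fintype.ofFinite G
  have : Fact (Nat.Prime 2) := ⟨Nat.prime_two⟩
  obtain ⟨φ, hφ⟩ : ∃ φ : G → G, IsCompleteMapping φ := h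
  intro P
  rw [or_iff_not_imp_right, not_not]
  intro hcyc
  by_contra h_ne_bot
  have : Nontrivial P := (Subgroup.nontrivial_iff_ne_bot _).mpr h_ne_bot
  obtain ⟨k, hk_pos, hk⟩ := P.2.nontrivial_iff_card.mp this
  have h_even : Even (Nat.card P) := hk ▸ (Nat.even_pow' hk_pos.ne').mpr even_two
  have h_minFac : (Nat.card G).minFac = 2 := (Nat.minFac_eq_two_iff _).mpr <|
    h_even.two_dvd.trans (Subgroup.card_subgroup_dvd_card _)
  have hN := hcyc.normalizer_le_centralizer h_minFac
  let := hcyc.commGroup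
  have h_prod := hφ.prod_map_eq_one (MonoidHom.transferSylow P hN)
  rw [MonoidHom.prod_univ_eq_pow_card_ker (MonoidHom.transferSylow_surjective P hN)] at h_prod
  exact MonoidHom.not_dvd_card_ker_transferSylow P hN <|
    (IsCyclic.orderOf_prod_univ_eq_two h_even).symm.dvd.trans (orderOf_dvd_of_pow_eq_one h_prod)
end

section
/- Let H be a normal subgroup of a finite group G with both H and G/H of odd order, let h_0, ..., h_{n-1} be a symmetric harmonious sequence in H (n = |H|), and K_0 = H, K_1, ..., K_{m-1} a symmetric harmonious sequence in G/H with representatives k_0 = 1, k_i ∈ K_i satisfying k_i k_{m-i} = 1 for 1 ≤ i ≤ m-1; set μ_r = k_{r+1}⋯k_{m-1} (μ_{m-1} = 1). Define g_{pm+r} = h_{2p} if r = 0 and g_{pm+r} = k_r μ_r h_{2p+1} μ_r^{-1} if 1 ≤ r ≤ m-1 (indices of h taken mod n). Then the sequence g_0, g_1, ..., g_{mn-1} is a permutation of the elements of G. -/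
theorem stmt16 (G : Type*) [Group G] [Finite G] (H : Subgroup G) [H.Normal]
    (n m : ℕ) (hn : n = Nat.card H) (hm : m = Nat.card (G ⧸ H))
    (hnodd : Odd n) (hmodd : Odd m)
    (h : ZMod n → H) (hhbij : Function.Bijective h)
    (hhprod : Function.Bijective (fun i => h i * h (i + 1)))
    (hhsymm : ∀ i : ZMod n, i ≠ 0 → h i * h (-i) = 1)
    (K : ZMod m → G ⧸ H) (hKbij : Function.Bijective K)
    (hKprod : Function.Bijective (fun i => K i * K (i + 1)))
    (hKsymm : ∀ i : ZMod m, i ≠ 0 → K i * K (-i) = 1)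
    (hK0 : K 0 = 1)
    (k : ℕ → G) (hk : ∀ r < m, (QuotientGroup.mk (k r) : G ⧸ H) = K r)
    (hk0 : k 0 = 1)
    (hksymm : ∀ i, 1 ≤ i → i ≤ m - 1 → k i * k (m - i) = 1)
    (μ : ℕ → G) (hμ : ∀ r, μ r = (((List.Ico (r + 1) m).map k).prod))
    (g : ℕ → G)
    (hg : ∀ p r, p < n → r < m →
      g (p * m + r) =
        if r = 0 then ((h ((2 * p : ℕ) : ZMod n) : G))
        else k r * μ r * ((h ((2 * p + 1 : ℕ) : ZMod n) : G)) * (μ r)⁻¹) :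
    Function.Bijective (fun i : Fin (m * n) => g i.val) := by
  have hn0 : n ≠ 0 := by rintro rfl; simp [Nat.odd_iff] at hnodd
  have hm0 : 0 < m := by
    rcases Nat.eq_zero_or_pos m with h0 | h0
    · subst h0; simp [Nat.odd_iff] at hmodd
    · exact h0
  haveI : NeZero m := ⟨hm0.ne'⟩
  have hcop : Nat.gcd n 2 = 1 := hnodd.coprime_two_right
  -- The quotient image of g (p*m+r) is K r
  have key : ∀ p r, p < n → r < m →
      (QuotientGroup.mk (g (p * m + r)) : G ⧸ H) = K r := by
    intro p r hp hr
    rw [hg p r hp hr]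
    split_ifs with h0
    · subst h0
      rw [(QuotientGroup.eq_one_iff _).mpr (h _).2]
      simp [hK0]
    · have hmem : μ r * ((h ((2 * p + 1 : ℕ) : ZMod n) : G)) * (μ r)⁻¹ ∈ H :=
        Subgroup.Normal.conj_mem ‹H.Normal› _ (h _).2 _
      have : k r * μ r * ((h ((2 * p + 1 : ℕ) : ZMod n) : G)) * (μ r)⁻¹
          = k r * (μ r * ((h ((2 * p + 1 : ℕ) : ZMod n) : G)) * (μ r)⁻¹) := by
        group
      rw [this]
      rw [QuotientGroup.mk_mul, (QuotientGroup.eq_one_iff _).mpr hmem, mul_one]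
      exact hk r hr
  have hinj : Function.Injective (fun i : Fin (m * n) => g i.val) := by
    intro i j hij
    simp only at hij
    have hip : i.val / m < n := by
      rw [Nat.div_lt_iff_lt_mul hm0]
      exact lt_of_lt_of_eq i.isLt (mul_comm m n)
    have hjp : j.val / m < n := by
      rw [Nat.div_lt_iff_lt_mul hm0]
      exact lt_of_lt_of_eq j.isLt (mul_comm m n)
    have hir : i.val % m < m := Nat.mod_lt _ hm0
    have hjr : j.val % m < m := Nat.mod_lt _ hm0
    have hi : i.val = i.val / m * m + i.val % m := (Nat.div_add_mod' _ _).symm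
    have hj : j.val = j.val / m * m + j.val % m := (Nat.div_add_mod' _ _).symm
    rw [hi, hj] at hij
    -- first: the remainders agree
    have hKeq : K (i.val % m) = K (j.val % m) := by
      rw [← key _ _ hip hir, ← key _ _ hjp hjr, hij]
    have hreq : i.val % m = j.val % m := by
      have hz : ((i.val % m : ℕ) : ZMod m) = ((j.val % m : ℕ) : ZMod m) :=
        hKbij.1 hKeq
      have := congrArg ZMod.val hz
      rwa [ZMod.val_cast_of_lt hir, ZMod.val_cast_of_lt hjr] at this
    -- now: the quotients agree
    rw [hg _ _ hip hir, hg _ _ hjp hjr, hreq] at hij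
    have hpeq : i.val / m = j.val / m := by
      split_ifs at hij with h0
      · have hheq : h ((2 * (i.val / m) : ℕ) : ZMod n)
            = h ((2 * (j.val / m) : ℕ) : ZMod n) := Subtype.coe_injective hij
        have hz := hhbij.1 hheq
        have hmod : 2 * (i.val / m) ≡ 2 * (j.val / m) [MOD n] :=
          (ZMod.natCast_eq_natCast_iff _ _ _).mp hz
        exact (hmod.cancel_left_of_coprime hcop).eq_of_lt_of_lt hip hjp
      · have h1 := mul_right_cancel hij
        have h2 : ((h ((2 * (i.val / m) + 1 : ℕ) : ZMod n) : G))
            = ((h ((2 * (j.val / m) + 1 : ℕ) : ZMod n) : G)) := by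
          rw [mul_assoc, mul_assoc] at h1
          exact mul_left_cancel (mul_left_cancel h1)
        have hheq := Subtype.coe_injective h2
        have hz := hhbij.1 hheq
        have hmod : 2 * (i.val / m) + 1 ≡ 2 * (j.val / m) + 1 [MOD n] :=
          (ZMod.natCast_eq_natCast_iff _ _ _).mp hz
        have hmod2 := Nat.ModEq.add_right_cancel' 1 hmod
        exact (hmod2.cancel_left_of_coprime hcop).eq_of_lt_of_lt hip hjp
    exact Fin.ext (by rw [hi, hj, hreq, hpeq])
  rw [Nat.bijective_iff_injective_and_card]
  refine ⟨hinj, ?_⟩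
  rw [Nat.card_eq_fintype_card, Fintype.card_fin, hn, hm,
    ← Subgroup.card_eq_card_quotient_mul_card_subgroup H]
end

section
/- Under the same construction, the sequence g_0, ..., g_{mn-1} satisfies the symmetry condition: g_i · g_{mn-i} = 1_G for all 1 ≤ i ≤ mn-1. -/
theorem stmt17 (G : Type*) [Group G] [Finite G] (H : Subgroup G) [H.Normal]
    (n m : ℕ) (hn : n = Nat.card H) (hm : m = Nat.card (G ⧸ H))
    (hnodd : Odd n) (hmodd : Odd m)
    (h : ZMod n → H) (hhbij : Function.Bijective h)
    (hhprod : Function.Bijective (fun i => h i * h (i + 1)))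
    (hhsymm : ∀ i : ZMod n, i ≠ 0 → h i * h (-i) = 1)
    (K : ZMod m → G ⧸ H) (hKbij : Function.Bijective K)
    (hKprod : Function.Bijective (fun i => K i * K (i + 1)))
    (hKsymm : ∀ i : ZMod m, i ≠ 0 → K i * K (-i) = 1)
    (hK0 : K 0 = 1)
    (k : ℕ → G) (hk : ∀ r < m, (QuotientGroup.mk (k r) : G ⧸ H) = K r)
    (hk0 : k 0 = 1)
    (hksymm : ∀ i, 1 ≤ i → i ≤ m - 1 → k i * k (m - i) = 1)
    (μ : ℕ → G) (hμ : ∀ r, μ r = (((List.Ico (r + 1) m).map k).prod))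
    (g : ℕ → G)
    (hg : ∀ p r, p < n → r < m →
      g (p * m + r) =
        if r = 0 then ((h ((2 * p : ℕ) : ZMod n) : G))
        else k r * μ r * ((h ((2 * p + 1 : ℕ) : ZMod n) : G)) * (μ r)⁻¹) :
    ∀ i, 1 ≤ i → i ≤ m * n - 1 → g i * g (m * n - i) = 1 := by
  have hnpos : 0 < n := hnodd.pos
  have hmpos : 0 < m := hmodd.pos
  haveI : NeZero n := ⟨hnpos.ne'⟩
  have hGodd : Odd (Nat.card G) := by
    rw [Subgroup.card_eq_card_quotient_mul_card_subgroup H, ← hn, ← hm]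
    exact hmodd.mul hnodd
  have hsq : ∀ x : G, x * x = 1 → x = 1 := by
    intro x hx
    have h2 : orderOf x ∣ 2 := orderOf_dvd_of_pow_eq_one (by rw [pow_two]; exact hx)
    have hd : orderOf x ∣ Nat.card G := orderOf_dvd_natCard x
    have ho := Nat.odd_iff.mp hGodd
    rcases (Nat.dvd_prime Nat.prime_two).mp h2 with h1 | h1
    · exact orderOf_eq_one_iff.mp h1
    · exfalso; rw [h1] at hd; omega
  -- h 0 = 1
  have h0 : h 0 = 1 := by
    obtain ⟨j, hj⟩ := hhbij.2 1
    rcases eq_or_ne j 0 with rfl | hj0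
    · exact hj
    · exfalso
      have hmj : h (-j) = 1 := by
        have := hhsymm j hj0
        rw [hj, one_mul] at this; exact this
      have hjj : -j = j := hhbij.1 (hmj.trans hj.symm)
      have h2j : (2 : ZMod n) * j = 2 * 0 := by
        rw [mul_zero, two_mul]
        nth_rewrite 1 [← hjj]
        exact neg_add_cancel j
      have hu : IsUnit (2 : ZMod n) := by
        have hc : Nat.Coprime 2 n := by
          rw [Nat.Prime.coprime_iff_not_dvd Nat.prime_two]
          have := Nat.odd_iff.mp hnodd
          omega
        have := (ZMod.isUnit_iff_coprime 2 n).mpr hc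
        simpa using this
      exact hj0 (hu.mul_left_cancel h2j)
  have hsymm' : ∀ x : ZMod n, (h x : G) * (h (-x) : G) = 1 := by
    intro x
    rcases eq_or_ne x 0 with rfl | hx
    · rw [neg_zero, h0]; simp
    · exact_mod_cast congrArg Subtype.val (hhsymm x hx)
  -- partial products
  set A : ℕ → G := fun r => ((List.Ico r m).map k).prod with hA
  have hAm : ∀ r, m ≤ r → A r = 1 := by
    intro r hr; simp [hA, List.Ico.eq_nil_of_le hr]
  have hAstep : ∀ r, r < m → A r = k r * A (r + 1) := by
    intro r hr
    simp [hA, List.Ico.eq_cons hr]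
  have hksymm' : ∀ r, 1 ≤ r → r ≤ m - 1 → k (m - r) = (k r)⁻¹ := fun r h1 h2 =>
    eq_inv_of_mul_eq_one_right (hksymm r h1 h2)
  set B : ℕ → G := fun s => ((List.Ico 1 (s + 1)).map k).prod with hB
  have hBstep : ∀ s, B (s + 1) = B s * k (s + 1) := by
    intro s
    have : List.Ico 1 (s + 1) ++ List.Ico (s + 1) (s + 2) = List.Ico 1 (s + 2) :=
      List.Ico.append_consecutive (by omega) (by omega)
    simp [hB, ← this, List.Ico.succ_singleton]
  have key : ∀ s, s ≤ m - 1 → B s * A (m - s) = 1 := by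
    intro s
    induction s with
    | zero => intro _; simp [hB, hAm m le_rfl, List.Ico.self_empty]
    | succ s ih =>
      intro hs
      have hs' : s ≤ m - 1 := by omega
      have h1 : m - (s + 1) < m := by omega
      have h2 : m - (s + 1) + 1 = m - s := by omega
      rw [hBstep, hAstep _ h1, h2, hksymm' (s + 1) (by omega) hs]
      calc B s * k (s+1) * ((k (s+1))⁻¹ * A (m - s))
          = B s * A (m - s) := by group
        _ = 1 := ih hs'
  have hA1 : A 1 = 1 := by
    apply hsq
    have hmm1 : m - 1 + 1 = m := by omega
    have h1 : B (m - 1) = A 1 := by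
      simp only [hB, hA, hmm1]
    have h2 := key (m - 1) le_rfl
    have h3 : m - (m - 1) = 1 := by omega
    rw [h3, h1] at h2
    exact h2
  have hAsymm : ∀ s, s ≤ m - 1 → A (m - s) = A (s + 1) := by
    intro s hs
    have h1 : B s * A (m - s) = 1 := key s hs
    have h2 : B s * A (s + 1) = A 1 := by
      have hap : List.Ico 1 (s + 1) ++ List.Ico (s + 1) m = List.Ico 1 m :=
        List.Ico.append_consecutive (by omega) (by omega)
      simp only [hB, hA, ← hap, List.map_append, List.prod_append]
    rw [hA1] at h2
    rw [eq_inv_of_mul_eq_one_right h1, eq_inv_of_mul_eq_one_right h2]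
  -- main argument
  intro i hi1 hi2
  have hmn : m * n = n * m := mul_comm m n
  have hmn1 : 1 ≤ m * n := Nat.mul_pos hmpos hnpos
  obtain ⟨p, r, hrm, hpn, rfl⟩ : ∃ p r, r < m ∧ p < n ∧ i = p * m + r := by
    refine ⟨i / m, i % m, Nat.mod_lt _ hmpos, ?_, by rw [mul_comm]; exact (Nat.div_add_mod i m).symm⟩
    rw [Nat.div_lt_iff_lt_mul hmpos]
    omega
  have hpm : p * m ≤ n * m := Nat.mul_le_mul_right m (le_of_lt hpn)
  rcases eq_or_ne r 0 with rfl | hr0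
  · -- case r = 0
    have hp1 : 1 ≤ p := by
      rcases Nat.eq_zero_or_pos p with rfl | h
      · simp at hi1
      · exact h
    have hpm1 : m ≤ p * m := Nat.le_mul_of_pos_left m hp1
    have hmi : m * n - (p * m + 0) = (n - p) * m + 0 := by
      rw [Nat.sub_mul]
      omega
    have hg1 := hg p 0 hpn hmpos
    rw [if_pos rfl] at hg1
    have hnp : n - p < n := by omega
    have hg2 := hg (n - p) 0 hnp hmpos
    rw [if_pos rfl] at hg2
    rw [hmi, hg1, hg2]
    have hcast : ((2 * (n - p) : ℕ) : ZMod n) = -((2 * p : ℕ) : ZMod n) := by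
      apply eq_neg_of_add_eq_zero_left
      have he : (2 * (n - p) + 2 * p : ℕ) = 2 * n := by omega
      rw [← Nat.cast_add, he]
      simp [ZMod.natCast_self]
    rw [hcast]
    exact hsymm' _
  · -- case 1 ≤ r ≤ m - 1
    have hr1 : 1 ≤ r := by omega
    have hrm1 : r ≤ m - 1 := by omega
    set q := n - 1 - p with hq
    have hqn : q < n := by omega
    have hqpn : q + p + 1 = n := by omega
    have he2 : (q + p + 1) * m = q * m + p * m + m := by ring
    have he3 : (q + p + 1) * m = n * m := by rw [hqpn]
    have hmi : m * n - (p * m + r) = q * m + (m - r) := by omega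
    have hg1 := hg p r hpn hrm
    rw [if_neg hr0] at hg1
    have hmr0 : m - r ≠ 0 := by omega
    have hg2 := hg q (m - r) hqn (by omega)
    rw [if_neg hmr0] at hg2
    have hμA : ∀ s, μ s = A (s + 1) := fun s => hμ s
    rw [hmi, hg1, hg2, hμA, hμA]
    have e1 : k r * A (r + 1) = A r := (hAstep r hrm).symm
    have e2 : k (m - r) = (k r)⁻¹ := hksymm' r hr1 hrm1
    have e3 : A (m - r + 1) = A r := by
      have hh : m - r + 1 = m - (r - 1) := by omega
      rw [hh, hAsymm (r - 1) (by omega)]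
      congr 1
      omega
    have hcast : ((2 * q + 1 : ℕ) : ZMod n) = -((2 * p + 1 : ℕ) : ZMod n) := by
      apply eq_neg_of_add_eq_zero_left
      have he : (2 * q + 1 + (2 * p + 1) : ℕ) = 2 * n := by omega
      rw [← Nat.cast_add, he]
      simp [ZMod.natCast_self]
    rw [e2, e3, hcast]
    set x : G := (h ((2 * p + 1 : ℕ) : ZMod n) : G) with hx
    set y : G := (h (-((2 * p + 1 : ℕ) : ZMod n)) : G) with hy
    have hxy : x * y = 1 := hsymm' _
    calc k r * A (r + 1) * x * (A (r + 1))⁻¹ * ((k r)⁻¹ * A r * y * (A r)⁻¹)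
        = A r * x * (A (r + 1))⁻¹ * (k r)⁻¹ * A r * y * (A r)⁻¹ := by
          rw [e1]; group
      _ = A r * x * (k r * A (r + 1))⁻¹ * A r * y * (A r)⁻¹ := by group
      _ = A r * x * (A r)⁻¹ * A r * y * (A r)⁻¹ := by rw [e1]
      _ = A r * (x * y) * (A r)⁻¹ := by group
      _ = 1 := by rw [hxy]; group
end
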